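/- arXiv:2509.25349 — 2 statements merged into one kernel-verified Lean document; each statement's English description precedes it below -/
import Mathlib

section
/- Let p₁=(ζ₁,v₁) and p₂=(ζ₂,v₂) be points of the quaternionic Heisenberg group 𝓗 with ζ₁ ≠ 0 and ζ₂ ≠ 0. Then equality ρ₀(p₁,p₂)² = ((|ζ₁|²+|ζ₂|²)² + |v₁−v₂|²)^{1/2} + 2|ζ₁|·|ζ₂| holds if and only if there exists a real number λ ≤ 0 such that |ζ₁|² + |ζ₂|² + v₁ − v₂ = 2λ·ζ̄₂ζ₁ (an equation in ℍ). -/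
open Quaternion Real

noncomputable section

/-- The Cygan distance on the quaternionic Heisenberg group `𝓗 = ℍ × Im ℍ`:
`ρ₀((ζ₁,v₁),(ζ₂,v₂)) = | |ζ₁−ζ₂|² + v₁−v₂−2·Im(ζ̄₂ζ₁) |^{1/2}`, the outer `|·|`
being the quaternionic norm. -/
def cygan (ζ₁ v₁ ζ₂ v₂ : ℍ) : ℝ :=
  Real.sqrt ‖((‖ζ₁ - ζ₂‖ ^ 2 : ℝ) : ℍ) + v₁ - v₂ - 2 * (star ζ₂ * ζ₁).im‖

/-!
With `w = ζ̄₂ζ₁` and `q = |ζ₁|² + |ζ₂|² + v₁ − v₂`, expanding `|ζ₁ − ζ₂|²` gives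
`ρ₀² = |q − 2w|`. Since `v₁ − v₂` is purely imaginary, `|q|² = (|ζ₁|² + |ζ₂|²)² + |v₁ − v₂|²`,
and `|2w| = 2|ζ₁||ζ₂|`; so the claimed identity is equality in the triangle inequality
`|q − 2w| ≤ |q| + |2w|`, which in the strictly convex space `ℍ ≅ ℝ⁴` happens exactly when
`q` is a nonpositive multiple of `w ≠ 0`.
-/

theorem norm_sub_eq_norm_add_norm_iff_exists_nonpos {E : Type*} [NormedAddCommGroup E]
    [NormedSpace ℝ E] [StrictConvexSpace ℝ E] {x y : E} (hy : y ≠ 0) :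
    ‖x - y‖ = ‖x‖ + ‖y‖ ↔ ∃ l : ℝ, l ≤ 0 ∧ x = l • y := by
  rw [sub_eq_add_neg, ← norm_neg y, ← sameRay_iff_norm_add,
    ← exists_nonneg_right_iff_sameRay (neg_ne_zero.2 hy)]
  constructor
  · rintro ⟨r, hr, hx⟩
    exact ⟨-r, neg_nonpos.2 hr, by rw [hx, smul_neg, neg_smul]⟩
  · rintro ⟨l, hl, hx⟩
    exact ⟨-l, neg_nonneg.2 hl, by rw [hx, smul_neg, neg_smul, neg_neg]⟩

namespace Quaternion

theorem norm_sub_sq (a b : ℍ) : ‖a - b‖ ^ 2 = ‖a‖ ^ 2 + ‖b‖ ^ 2 - 2 * (star b * a).re := by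
  have hre : inner ℝ a b = (star b * a).re := by
    rw [inner_def]
    simp only [re_mul, re_star, imI_star, imJ_star, imK_star]
    ring
  rw [norm_sub_sq_real, hre]
  ring

theorem norm_coe_add_sq_of_re_eq_zero (t : ℝ) {v : ℍ} (hv : v.re = 0) :
    ‖(t : ℍ) + v‖ ^ 2 = t ^ 2 + ‖v‖ ^ 2 := by
  have horth : inner ℝ (t : ℍ) v = 0 := by
    simp [inner_def, re_mul, hv]
  rw [← sq_abs t, ← norm_eq_abs, ← norm_coe, sq, sq, sq,
    norm_add_sq_eq_norm_sq_add_norm_sq_real horth]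

end Quaternion

theorem cygan_sq (ζ₁ v₁ ζ₂ v₂ : ℍ) :
    cygan ζ₁ v₁ ζ₂ v₂ ^ 2 =
      ‖((‖ζ₁‖ ^ 2 + ‖ζ₂‖ ^ 2 : ℝ) : ℍ) + v₁ - v₂ - 2 * (star ζ₂ * ζ₁)‖ := by
  rw [cygan, sq_sqrt (norm_nonneg _), Quaternion.norm_sub_sq]
  congr 1
  conv_rhs => rw [← re_add_im (star ζ₂ * ζ₁)]
  rw [coe_sub, coe_mul, show ((2 : ℝ) : ℍ) = 2 from rfl]
  noncomm_ring

/-- Equality in the Cygan distance estimate holds iff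
`|ζ₁|² + |ζ₂|² + v₁ − v₂ = 2λ·ζ̄₂ζ₁` for some real `λ ≤ 0`. -/
theorem cygan_sq_eq_iff
    (ζ₁ v₁ ζ₂ v₂ : ℍ) (hv₁ : v₁.re = 0) (hv₂ : v₂.re = 0)
    (hζ₁ : ζ₁ ≠ 0) (hζ₂ : ζ₂ ≠ 0) :
    cygan ζ₁ v₁ ζ₂ v₂ ^ 2 =
        Real.sqrt ((‖ζ₁‖ ^ 2 + ‖ζ₂‖ ^ 2) ^ 2 + ‖v₁ - v₂‖ ^ 2) + 2 * ‖ζ₁‖ * ‖ζ₂‖ ↔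
      ∃ l : ℝ, l ≤ 0 ∧
        ((‖ζ₁‖ ^ 2 + ‖ζ₂‖ ^ 2 : ℝ) : ℍ) + v₁ - v₂ = (2 * l) • (star ζ₂ * ζ₁) := by
  rw [cygan_sq, two_mul, ← two_smul ℝ]
  set w := star ζ₂ * ζ₁
  set q : ℍ := ((‖ζ₁‖ ^ 2 + ‖ζ₂‖ ^ 2 : ℝ) : ℍ) + v₁ - v₂
  have hw : (2 : ℝ) • w ≠ 0 := smul_ne_zero two_ne_zero (mul_ne_zero (star_ne_zero.2 hζ₂) hζ₁)
  have hq : Real.sqrt ((‖ζ₁‖ ^ 2 + ‖ζ₂‖ ^ 2) ^ 2 + ‖v₁ - v₂‖ ^ 2) = ‖q‖ := by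
    have hv : (v₁ - v₂).re = 0 := by rw [re_sub, hv₁, hv₂, sub_zero]
    rw [← Quaternion.norm_coe_add_sq_of_re_eq_zero _ hv, sqrt_sq (norm_nonneg _), ← add_sub_assoc]
  have h2w : 2 * ‖ζ₁‖ * ‖ζ₂‖ = ‖(2 : ℝ) • w‖ := by
    rw [norm_smul, norm_mul, Quaternion.norm_star, norm_two]
    ring
  rw [hq, h2w, norm_sub_eq_norm_add_norm_iff_exists_nonpos hw]
  exact exists_congr fun l => and_congr_right' (by rw [smul_smul, mul_comm])
end
end

section
/- Fix ψ₁ ∈ [−π/2, π/2] and define η(ψ₂, φ) = √(2(1 + cos ψ₁ cos ψ₂ + cos φ · sin ψ₁ sin ψ₂)) + 2√(cos ψ₁ cos ψ₂) for (ψ₂, φ) ∈ [−π/2, π/2] × [0, π]. Then the maximum of η over [−π/2, π/2] × [0, π] exists and equals √2·((1−sin ψ₁)^{1/3} + (1+sin ψ₁)^{1/3})^{3/2}; that is, η(ψ₂,φ) ≤ √2·((1−sin ψ₁)^{1/3} + (1+sin ψ₁)^{1/3})^{3/2} for all (ψ₂,φ) in the domain, and this bound is attained. -/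
/-!
Write `1 - sin ψ₁ = p³` and `1 + sin ψ₁ = q³`, so that `cos ψ₁ = r³` with `r = √(pq)`, and note
`(q - p)² + (2r)² = (p + q)²`. Cauchy–Schwarz then gives
`(q - p) · cos φ sin ψ₂ + 2r cos ψ₂ ≤ p + q`, which bounds the first radicand of `η` by
`2(p² + q²)(p + q - w)` with `w = r cos ψ₂`; a second Cauchy–Schwarz gives
`√(2(p² + q²)) √(p + q - w) + 2r √w ≤ √(2(p² + q²) + 4r²) √(p + q) = √(2(p + q)³)`.
Both are equalities at `φ = 0`, `sin ψ₂ = (q - p)/(p + q)`, `cos ψ₂ = 2r/(p + q)`.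
-/

open Real

noncomputable section

lemma mul_add_mul_le_sqrt_mul_sqrt (a b x y : ℝ) :
    a * x + b * y ≤ √(a ^ 2 + b ^ 2) * √(x ^ 2 + y ^ 2) := by
  simpa [Fin.sum_univ_two] using sum_mul_le_sqrt_mul_sqrt Finset.univ ![a, b] ![x, y]

lemma rpow_one_third_pow_three {x : ℝ} (hx : 0 ≤ x) : (x ^ ((1 : ℝ) / 3)) ^ 3 = x := by
  simpa [one_div] using rpow_inv_natCast_pow hx (n := 3) (by norm_num)

lemma sqrt_two_mul_pow_three {m : ℝ} (hm : 0 ≤ m) : √(2 * m ^ 3) = √2 * m ^ ((3 : ℝ) / 2) := by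
  rw [sqrt_mul zero_le_two, sqrt_eq_rpow (m ^ 3), ← rpow_natCast, ← rpow_mul hm]
  norm_num

lemma exists_mem_Icc_cos_eq_sin_eq {u v : ℝ} (hu : 0 ≤ u) (huv : u ^ 2 + v ^ 2 = 1) :
    ∃ ψ ∈ Set.Icc (-(π / 2)) (π / 2), cos ψ = u ∧ sin ψ = v := by
  obtain ⟨hv₁, hv₂⟩ := abs_le.mp ((sq_le_one_iff_abs_le_one v).mp (by nlinarith))
  refine ⟨arcsin v, arcsin_mem_Icc v, ?_, sin_arcsin hv₁ hv₂⟩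
  rw [cos_arcsin, ← huv, add_sub_cancel_right, sqrt_sq hu]

section

variable {p q r : ℝ}

lemma sub_mul_add_two_mul_le_add {x y : ℝ} (hr : r ^ 2 = p * q) (hpq : 0 ≤ p + q)
    (hxy : x ^ 2 + y ^ 2 ≤ 1) : (q - p) * x + 2 * r * y ≤ p + q := by
  have hpq2 : (q - p) ^ 2 + (2 * r) ^ 2 = (p + q) ^ 2 := by linear_combination 4 * hr
  calc (q - p) * x + 2 * r * y ≤ √((q - p) ^ 2 + (2 * r) ^ 2) * √(x ^ 2 + y ^ 2) :=
        mul_add_mul_le_sqrt_mul_sqrt _ _ _ _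
    _ ≤ (p + q) * 1 := by
        rw [hpq2, sqrt_sq hpq]
        gcongr
        exact sqrt_le_one.mpr hxy
    _ = p + q := mul_one _

lemma sqrt_mul_sub_add_two_mul_sqrt_le {w : ℝ} (hr : r ^ 2 = p * q) (hw : 0 ≤ w)
    (hwpq : w ≤ p + q) :
    √(2 * (p ^ 2 + q ^ 2) * (p + q - w)) + 2 * r * √w ≤ √(2 * (p + q) ^ 3) := by
  calc √(2 * (p ^ 2 + q ^ 2) * (p + q - w)) + 2 * r * √w
      = √(2 * (p ^ 2 + q ^ 2)) * √(p + q - w) + 2 * r * √w := by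
        rw [sqrt_mul (by positivity)]
    _ ≤ √(√(2 * (p ^ 2 + q ^ 2)) ^ 2 + (2 * r) ^ 2) * √(√(p + q - w) ^ 2 + √w ^ 2) :=
        mul_add_mul_le_sqrt_mul_sqrt _ _ _ _
    _ = √(2 * (p + q) ^ 3) := by
        rw [sq_sqrt (by positivity), sq_sqrt (by linarith), sq_sqrt hw,
          ← sqrt_mul (by positivity)]
        congr 1
        linear_combination 4 * (p + q) * hr

lemma eq_sqrt_mul_pow_three {c s : ℝ} (hc : 0 ≤ c) (hcs : c ^ 2 = 1 - s ^ 2)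
    (hp3 : p ^ 3 = 1 - s) (hq3 : q ^ 3 = 1 + s) (hpq : 0 ≤ p * q) : c = √(p * q) ^ 3 := by
  refine (pow_left_inj₀ hc (by positivity) two_ne_zero).mp ?_
  rw [hcs, pow_right_comm, sq_sqrt hpq, mul_pow, hp3, hq3]
  ring

/-- `eta c s u v t` is `η(ψ₂, φ)` for `c = cos ψ₁`, `s = sin ψ₁`, `(u, v) = (cos ψ₂, sin ψ₂)`
and `t = cos φ`. -/
def eta (c s u v t : ℝ) : ℝ := √(2 * (1 + c * u + t * s * v)) + 2 * √(c * u)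

variable {c s : ℝ}

lemma eta_le (hr0 : 0 ≤ r) (hr : r ^ 2 = p * q) (hpq : 0 ≤ p + q) (hc : c = r ^ 3)
    (hs : 2 * s = q ^ 3 - p ^ 3) (h1 : p ^ 3 + q ^ 3 = 2) {u v t : ℝ} (hu : 0 ≤ u)
    (huv : u ^ 2 + v ^ 2 = 1) (ht : |t| ≤ 1) :
    eta c s u v t ≤ √(2 * (p + q) ^ 3) := by
  subst hc
  have htv : (t * v) ^ 2 + u ^ 2 ≤ 1 := by
    nlinarith [(sq_le_one_iff_abs_le_one t).mpr ht, sq_nonneg v]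
  have htan := sub_mul_add_two_mul_le_add hr hpq htv
  have hru : 2 * r * u ≤ p + q := by
    simpa using sub_mul_add_two_mul_le_add hr hpq (x := 0) (y := u) (by nlinarith)
  have hradicand :
      2 * (1 + r ^ 3 * u + t * s * v) ≤ 2 * (p ^ 2 + q ^ 2) * (p + q - r * u) := by
    have hK : 0 ≤ p ^ 2 + p * q + q ^ 2 := by nlinarith [sq_nonneg (p + q)]
    linear_combination (p ^ 2 + p * q + q ^ 2) * htan - h1 + t * v * hs + 2 * r * u * hr
  have hsqrt : 2 * √(r ^ 3 * u) = 2 * r * √(r * u) := by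
    rw [show r ^ 3 * u = r ^ 2 * (r * u) by ring, sqrt_mul (sq_nonneg r), sqrt_sq hr0,
      mul_assoc]
  calc eta (r ^ 3) s u v t
      ≤ √(2 * (p ^ 2 + q ^ 2) * (p + q - r * u)) + 2 * r * √(r * u) := by
        rw [eta, hsqrt]; gcongr
    _ ≤ √(2 * (p + q) ^ 3) :=
        sqrt_mul_sub_add_two_mul_sqrt_le hr (mul_nonneg hr0 hu) (by nlinarith)

lemma eta_eq (hr : r ^ 2 = p * q) (hpq : 0 < p + q) (hc : c = r ^ 3)
    (hs : 2 * s = q ^ 3 - p ^ 3) (h1 : p ^ 3 + q ^ 3 = 2) :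
    eta c s (2 * r / (p + q)) ((q - p) / (p + q)) 1 = √(2 * (p + q) ^ 3) := by
  subst hc
  have sqrt_sq_mul {a : ℝ} (ha : 0 ≤ a) : √(a ^ 2 * (2 / (p + q))) = a * √(2 / (p + q)) := by
    rw [sqrt_mul (sq_nonneg a), sqrt_sq ha]
  have h₁ : 2 * (1 + r ^ 3 * (2 * r / (p + q)) + 1 * s * ((q - p) / (p + q))) =
      (p ^ 2 + q ^ 2) ^ 2 * (2 / (p + q)) := by
    field_simp
    linear_combination (-(p + q) / 2) * h1 + ((q - p) / 2) * hs + 2 * (r ^ 2 + p * q) * hr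
  have h₂ : r ^ 3 * (2 * r / (p + q)) = (p * q) ^ 2 * (2 / (p + q)) := by
    rw [← hr]; ring
  have h₃ : 2 * (p + q) ^ 3 = ((p + q) ^ 2) ^ 2 * (2 / (p + q)) := by
    field_simp
  rw [eta, h₁, h₂, h₃, sqrt_sq_mul (by positivity), sqrt_sq_mul (hr ▸ sq_nonneg r),
    sqrt_sq_mul (by positivity)]
  ring

end

/-- For fixed `ψ₁ ∈ [−π/2, π/2]`, the maximum over
`(ψ₂, φ) ∈ [−π/2, π/2] × [0, π]` of
`η(ψ₂,φ) = √(2(1 + cos ψ₁ cos ψ₂ + cos φ sin ψ₁ sin ψ₂)) + 2√(cos ψ₁ cos ψ₂)`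
exists and equals `√2·((1−sin ψ₁)^{1/3}+(1+sin ψ₁)^{1/3})^{3/2}`. -/
theorem max_eta
    (ψ₁ : ℝ) (hψ₁ : ψ₁ ∈ Set.Icc (-(π / 2)) (π / 2)) :
    (∀ ψ₂ ∈ Set.Icc (-(π / 2)) (π / 2), ∀ φ ∈ Set.Icc (0 : ℝ) π,
        Real.sqrt (2 * (1 + Real.cos ψ₁ * Real.cos ψ₂ +
            Real.cos φ * Real.sin ψ₁ * Real.sin ψ₂)) +
          2 * Real.sqrt (Real.cos ψ₁ * Real.cos ψ₂) ≤
        Real.sqrt 2 *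
          ((1 - Real.sin ψ₁) ^ ((1 : ℝ) / 3) +
            (1 + Real.sin ψ₁) ^ ((1 : ℝ) / 3)) ^ ((3 : ℝ) / 2)) ∧
    (∃ ψ₂ ∈ Set.Icc (-(π / 2)) (π / 2), ∃ φ ∈ Set.Icc (0 : ℝ) π,
        Real.sqrt (2 * (1 + Real.cos ψ₁ * Real.cos ψ₂ +
            Real.cos φ * Real.sin ψ₁ * Real.sin ψ₂)) +
          2 * Real.sqrt (Real.cos ψ₁ * Real.cos ψ₂) =
        Real.sqrt 2 *
          ((1 - Real.sin ψ₁) ^ ((1 : ℝ) / 3) +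
            (1 + Real.sin ψ₁) ^ ((1 : ℝ) / 3)) ^ ((3 : ℝ) / 2)) := by
  set p := (1 - sin ψ₁) ^ ((1 : ℝ) / 3)
  set q := (1 + sin ψ₁) ^ ((1 : ℝ) / 3)
  have hp : 0 ≤ p := rpow_nonneg (by linarith [sin_le_one ψ₁]) _
  have hq : 0 ≤ q := rpow_nonneg (by linarith [neg_one_le_sin ψ₁]) _
  have hp3 : p ^ 3 = 1 - sin ψ₁ := rpow_one_third_pow_three (by linarith [sin_le_one ψ₁])
  have hq3 : q ^ 3 = 1 + sin ψ₁ := rpow_one_third_pow_three (by linarith [neg_one_le_sin ψ₁])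
  have h1 : p ^ 3 + q ^ 3 = 2 := by rw [hp3, hq3]; ring
  have hs : 2 * sin ψ₁ = q ^ 3 - p ^ 3 := by rw [hp3, hq3]; ring
  have hpq : 0 < p + q := by nlinarith [pow_nonneg hp 2, pow_nonneg hq 2, mul_nonneg hp hq]
  have hr : √(p * q) ^ 2 = p * q := sq_sqrt (mul_nonneg hp hq)
  have hc : cos ψ₁ = √(p * q) ^ 3 :=
    eq_sqrt_mul_pow_three (cos_nonneg_of_mem_Icc hψ₁) (cos_sq' ψ₁) hp3 hq3 (mul_nonneg hp hq)
  rw [← sqrt_two_mul_pow_three hpq.le]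
  refine ⟨fun ψ₂ hψ₂ φ _ ↦ eta_le (sqrt_nonneg _) hr hpq.le hc hs h1
    (cos_nonneg_of_mem_Icc hψ₂) (cos_sq_add_sin_sq ψ₂) (abs_cos_le_one φ), ?_⟩
  obtain ⟨ψ₂, hψ₂, hcos, hsin⟩ := exists_mem_Icc_cos_eq_sin_eq
    (u := 2 * √(p * q) / (p + q)) (v := (q - p) / (p + q)) (by positivity)
    (by field_simp; linear_combination 4 * hr)
  refine ⟨ψ₂, hψ₂, 0, ⟨le_rfl, pi_pos.le⟩, ?_⟩
  rw [cos_zero, hcos, hsin]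
  exact eta_eq hr hpq hc hs h1
end
end
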